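/- Under the homogeneity C_n^{CRR}(s, κS) = κC_n^{CRR}(s, S), the reduced functions C_n^{BC}(s) := C_n^{CRR}(s, 1) satisfy the one-variable recursion C_n^{BC}(s) = e^{−rΔt}[p_up·u·max(Ψ(s^up, 1), C_{n+1}^{BC}(s^up)) + p_dw·u^{−1}·max(Ψ(s^dw, 1), C_{n+1}^{BC}(s^dw))], where u = e^{σ√Δt}. -/
import Mathlib


/-- Under positive homogeneity of the CRR continuation values, the reduced functions
`C_n^{BC}(s) = C_n^{CRR}(s, 1)` satisfy the one-variable binomial-chain recursion. -/
theorem bc_reduced_recursion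
    (M N : ℕ) (σ Δt : ℝ) (hσ : 0 < σ) (hΔt : 0 < Δt) (pup pdw r : ℝ)
    (up dw : (Fin (M - 1) → Bool) → (Fin (M - 1) → Bool))
    (Ψ : (Fin (M - 1) → Bool) → ℝ → ℝ)
    (hΨ : ∀ s (κ S : ℝ), 0 < κ → 0 < S → Ψ s (κ * S) = κ * Ψ s S)
    (C : ℕ → (Fin (M - 1) → Bool) → ℝ → ℝ)
    (hhom : ∀ n s (κ S : ℝ), 0 < κ → 0 < S → C n s (κ * S) = κ * C n s S)
    (hrec : ∀ n, n < N → ∀ s (S : ℝ), 0 < S →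
      C n s S = Real.exp (-(r * Δt)) *
        (pup * max (Ψ (up s) (S * Real.exp (σ * Real.sqrt Δt)))
                   (C (n + 1) (up s) (S * Real.exp (σ * Real.sqrt Δt))) +
         pdw * max (Ψ (dw s) (S / Real.exp (σ * Real.sqrt Δt)))
                   (C (n + 1) (dw s) (S / Real.exp (σ * Real.sqrt Δt))))) :
    ∀ n, n < N → ∀ s,
      C n s 1 = Real.exp (-(r * Δt)) *
        (pup * Real.exp (σ * Real.sqrt Δt) *
            max (Ψ (up s) 1) (C (n + 1) (up s) 1) +
         pdw * (Real.exp (σ * Real.sqrt Δt))⁻¹ *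
            max (Ψ (dw s) 1) (C (n + 1) (dw s) 1)) := by
  intro n hn s
  have hu : (0:ℝ) < Real.exp (σ * Real.sqrt Δt) := Real.exp_pos _
  have h1 : C n s 1 = _ := hrec n hn s 1 one_pos
  rw [h1]
  congr 1
  have e1 : (1:ℝ) * Real.exp (σ * Real.sqrt Δt) = Real.exp (σ * Real.sqrt Δt) * 1 := by ring
  have e2 : (1:ℝ) / Real.exp (σ * Real.sqrt Δt) = (Real.exp (σ * Real.sqrt Δt))⁻¹ * 1 := by
    ring
  rw [e1, e2, hΨ _ _ _ hu one_pos, hΨ _ _ _ (inv_pos.2 hu) one_pos,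
    hhom _ _ _ _ hu one_pos, hhom _ _ _ _ (inv_pos.2 hu) one_pos,
    ← mul_max_of_nonneg _ _ hu.le, ← mul_max_of_nonneg _ _ (inv_pos.2 hu).le]
  ring
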